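/- Let y₁ < y₂ < ... < yₙ be real numbers with n > 4 and let 2 ≤ i ≤ n−2. Among all 2-partitions (P₁, P₂) of {y₁, ..., yₙ} with |P₁| = i and |P₂| = n−i, the loss L(P₁, P₂) = SS(P₁) + SS(P₂) attains its minimum only at the contiguous partition P₁* = {y₁, ..., yᵢ}, P₂* = {y_{i+1}, ..., yₙ} or at the contiguous partition P₁** = {y₁, ..., y_{n−i}}, P₂** = {y_{n−i+1}, ..., yₙ} (the latter corresponding to sizes (n−i, i)). -/

import Mathlib

open Finset

/-- Mean of the values of `y` over an index set. -/
noncomputable def mu {n : ℕ} (y : Fin n → ℝ) (P : Finset (Fin n)) : ℝ :=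
  (∑ j ∈ P, y j) / P.card

/-- In-group sum of squared deviations from the mean. -/
noncomputable def SS {n : ℕ} (y : Fin n → ℝ) (P : Finset (Fin n)) : ℝ :=
  ∑ j ∈ P, (y j - mu y P) ^ 2

/-
Writing `s` for the sum of the values in `Q`, the loss of the partition `(Q, Qᶜ)` with `#Q = i`
equals `∑ yⱼ² - (s² / i + (T - s)² / (n - i))`, where `T` is the total sum; it depends on `Q`
only through `s`, via a strictly concave function of `s`. Because `y` is strictly increasing,
exchanging elements shows that `s` is strictly smallest at the first `i` indices and strictly
largest at the last `i`. For any other `Q` the sum `s` lies strictly between these two extremes,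
so strict concavity makes its loss exceed the smaller of the two contiguous losses.
-/

lemma SS_eq_sum_sq_sub {n : ℕ} (y : Fin n → ℝ) (P : Finset (Fin n)) :
    SS y P = ∑ j ∈ P, y j ^ 2 - (∑ j ∈ P, y j) ^ 2 / #P := by
  rcases P.eq_empty_or_nonempty with rfl | hP
  · simp [SS]
  have hc : (#P : ℝ) ≠ 0 := by exact_mod_cast hP.card_pos.ne'
  simp only [SS, mu, sub_sq, sum_add_distrib, sum_sub_distrib, sum_const, nsmul_eq_mul,
    ← sum_mul, ← mul_sum]
  field_simp
  ring

lemma SS_add_SS_compl {n : ℕ} (y : Fin n → ℝ) (Q : Finset (Fin n)) :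
    SS y Q + SS y Qᶜ = ∑ j, y j ^ 2 -
      ((∑ j ∈ Q, y j) ^ 2 / #Q + (∑ j, y j - ∑ j ∈ Q, y j) ^ 2 / (n - #Q : ℕ)) := by
  rw [SS_eq_sum_sq_sub, SS_eq_sum_sq_sub, card_compl, Fintype.card_fin,
    ← sum_compl_add_sum Q (fun j => y j ^ 2), ← sum_compl_add_sum Q y]
  ring

lemma Fin.card_filter_le_val {n m : ℕ} : #{j : Fin n | m ≤ (j : ℕ)} = n - m := by
  have := card_filter_add_card_filter_not (s := univ) fun j : Fin n => (j : ℕ) < m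
  simp only [not_lt, Fin.card_filter_val_lt, card_univ, Fintype.card_fin] at this
  omega

lemma sum_lt_sum_of_card_eq {α R : Type*} [DecidableEq α] [CommRing R] [LinearOrder R]
    [IsStrictOrderedRing R] {f : α → R} {A Q : Finset α} (hcard : #Q = #A) (hne : Q ≠ A)
    (hf : ∀ a ∈ A, ∀ b ∉ A, f a < f b) : ∑ a ∈ A, f a < ∑ b ∈ Q, f b := by
  have hQA : (Q \ A).Nonempty := by
    rw [nonempty_iff_ne_empty, Ne, sdiff_eq_empty_iff_subset]
    exact fun h => hne (eq_of_subset_of_card_le h hcard.ge)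
  have hAQ : (A \ Q).Nonempty := by
    rw [← card_pos, card_sdiff_comm hcard.symm]; exact hQA.card_pos
  have hpos : 0 < ∑ a ∈ A \ Q, ∑ b ∈ Q \ A, (f b - f a) :=
    sum_pos (fun a ha => sum_pos (fun b hb => sub_pos.2 (hf a (mem_sdiff.1 ha).1 b
      (mem_sdiff.1 hb).2)) hQA) hAQ
  simp only [sum_sub_distrib, sum_const, card_sdiff_comm hcard, nsmul_eq_mul, ← mul_sum,
    ← mul_sub] at hpos
  rw [← sub_pos, ← sum_sdiff_sub_sum_sdiff]
  exact pos_of_mul_pos_right hpos (Nat.cast_nonneg _)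

lemma sq_div_add_sq_div_lt_max {a b T s₁ s s₂ : ℝ} (ha : 0 < a) (hb : 0 < b)
    (h₁ : s₁ < s) (h₂ : s < s₂) :
    s ^ 2 / a + (T - s) ^ 2 / b <
      max (s₁ ^ 2 / a + (T - s₁) ^ 2 / b) (s₂ ^ 2 / a + (T - s₂) ^ 2 / b) := by
  set g : ℝ → ℝ := fun t => t ^ 2 / a + (T - t) ^ 2 / b
  -- `g` is quadratic with leading coefficient `1 / a + 1 / b > 0`: it lies below its chord.
  have hinterp : (s₂ - s₁) * g s - ((s₂ - s) * g s₁ + (s - s₁) * g s₂) =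
      (1 / a + 1 / b) * (s₂ - s₁) * ((s - s₁) * (s - s₂)) := by
    simp only [g]; field_simp; ring
  have hneg : (1 / a + 1 / b) * (s₂ - s₁) * ((s - s₁) * (s - s₂)) < 0 :=
    mul_neg_of_pos_of_neg
      (mul_pos (add_pos (one_div_pos.2 ha) (one_div_pos.2 hb)) (by linarith))
      (mul_neg_of_pos_of_neg (by linarith) (by linarith))
  show g s < max (g s₁) (g s₂)
  nlinarith [le_max_left (g s₁) (g s₂), le_max_right (g s₁) (g s₂)]

theorem stmt_1_general (n i : ℕ) (hi : 2 ≤ i) (hi' : i ≤ n - 2)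
    (y : Fin n → ℝ) (hy : StrictMono y)
    (P₁ P₂ : Finset (Fin n)) (hdisj : Disjoint P₁ P₂) (hunion : P₁ ∪ P₂ = univ)
    (hcard : P₁.card = i)
    (hmin : ∀ Q₁ Q₂ : Finset (Fin n), Disjoint Q₁ Q₂ → Q₁ ∪ Q₂ = univ →
      Q₁.card = i → SS y P₁ + SS y P₂ ≤ SS y Q₁ + SS y Q₂) :
    (P₁ = univ.filter (fun j : Fin n => (j : ℕ) < i) ∧
      P₂ = univ.filter (fun j : Fin n => i ≤ (j : ℕ))) ∨
    (P₁ = univ.filter (fun j : Fin n => n - i ≤ (j : ℕ)) ∧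
      P₂ = univ.filter (fun j : Fin n => (j : ℕ) < n - i)) := by
  set A : Finset (Fin n) := {j | (j : ℕ) < i}
  set B : Finset (Fin n) := {j | n - i ≤ (j : ℕ)}
  have hP₂ : P₂ = P₁ᶜ := (IsCompl.compl_eq ⟨hdisj, codisjoint_iff.2 hunion⟩).symm
  have hA : #A = i := by rw [Fin.card_filter_val_lt]; omega
  have hB : #B = i := by rw [Fin.card_filter_le_val]; omega
  by_cases h₁ : P₁ = A
  · exact Or.inl ⟨h₁, by rw [hP₂, h₁, compl_filter]; simp only [not_lt]⟩
  by_cases h₂ : P₁ = B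
  · exact Or.inr ⟨h₂, by rw [hP₂, h₂, compl_filter]; simp only [not_le]⟩
  have hsA : ∑ j ∈ A, y j < ∑ j ∈ P₁, y j :=
    sum_lt_sum_of_card_eq (hcard.trans hA.symm) h₁ fun a ha b hb =>
      hy (by simp only [A, mem_filter_univ] at ha hb; omega)
  have hsB : ∑ j ∈ P₁, y j < ∑ j ∈ B, y j := by
    have := sum_lt_sum_of_card_eq (f := fun j => -y j) (hcard.trans hB.symm) h₂ fun a ha b hb =>
      neg_lt_neg (hy (by simp only [B, mem_filter_univ] at ha hb; omega))
    simpa only [sum_neg_distrib, neg_lt_neg_iff] using this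
  have hminA := hmin A Aᶜ disjoint_compl_right (union_compl A) hA
  have hminB := hmin B Bᶜ disjoint_compl_right (union_compl B) hB
  rw [hP₂, SS_add_SS_compl, SS_add_SS_compl, hcard, hA, sub_le_sub_iff_left] at hminA
  rw [hP₂, SS_add_SS_compl, SS_add_SS_compl, hcard, hB, sub_le_sub_iff_left] at hminB
  have hi_pos : (0 : ℝ) < i := by exact_mod_cast (by omega : 0 < i)
  have hni_pos : (0 : ℝ) < (n - i : ℕ) := by exact_mod_cast (by omega : 0 < n - i)
  exact ((sq_div_add_sq_div_lt_max hi_pos hni_pos hsA hsB).not_ge (max_le hminA hminB)).elim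

theorem stmt_1 (n i : ℕ) (hn : 4 < n) (hi : 2 ≤ i) (hi' : i ≤ n - 2)
    (y : Fin n → ℝ) (hy : StrictMono y)
    (P₁ P₂ : Finset (Fin n)) (hdisj : Disjoint P₁ P₂) (hunion : P₁ ∪ P₂ = univ)
    (hcard : P₁.card = i)
    (hmin : ∀ Q₁ Q₂ : Finset (Fin n), Disjoint Q₁ Q₂ → Q₁ ∪ Q₂ = univ →
      Q₁.card = i → SS y P₁ + SS y P₂ ≤ SS y Q₁ + SS y Q₂) :
    (P₁ = univ.filter (fun j : Fin n => (j : ℕ) < i) ∧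
      P₂ = univ.filter (fun j : Fin n => i ≤ (j : ℕ))) ∨
    (P₁ = univ.filter (fun j : Fin n => n - i ≤ (j : ℕ)) ∧
      P₂ = univ.filter (fun j : Fin n => (j : ℕ) < n - i)) :=
  stmt_1_general n i hi hi' y hy P₁ P₂ hdisj hunion hcard hmin
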